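/- Let S = (S_t)_{t≥0} be a càdlàg process adapted to 𝔽 and let f be a strictly increasing or strictly decreasing real-valued function defined on a subset of ℝ containing the range of S. Then for every probability measure Q equivalent to P, the process S has no arbitrage in the class S(𝔽) of simple predictable integrands of bounded support under Q if and only if the process Y_t = f(S_t) has no arbitrage in S(𝔽) under Q. -/

import Mathlib

open MeasureTheory ProbabilityTheory Filter Set
open scoped NNReal ENNReal

variable {Ω : Type*} {m0 : MeasurableSpace Ω}

/-- A simple predictable integrand with bounded support for the filtration `ℱ`:
`H = g₀ 1_{{0}} + ∑_{j=1}^{n-1} g_j 1_{(τ_j, τ_{j+1}]}` with `n ≥ 2`,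
`0 ≤ τ₁ ≤ ⋯ ≤ τ_n` stopping times, `τ_n` bounded, and `g_j` being `F_{τ_j}`-measurable. -/
structure SimpleStrategy (ℱ : MeasureTheory.Filtration ℝ≥0 m0) where
  n : ℕ
  two_le : 2 ≤ n
  g0 : ℝ
  τ : ℕ → Ω → ℝ≥0
  g : ℕ → Ω → ℝ
  stopping : ∀ j, 1 ≤ j → j ≤ n → MeasureTheory.IsStoppingTime ℱ (fun ω => ((τ j ω : ℝ≥0) : WithTop ℝ≥0))
  mono : ∀ j, 1 ≤ j → j < n → ∀ ω, τ j ω ≤ τ (j + 1) ω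
  bounded : ∃ T : ℝ≥0, ∀ ω, τ n ω ≤ T
  g_meas : ∀ j (h1 : 1 ≤ j) (h2 : j < n),
    Measurable[(stopping j h1 h2.le).measurableSpace] (g j)

/-- terminal gain `(H ⬝ X)_∞ = ∑_{j=1}^{n-1} g_j (X_{τ_{j+1}} - X_{τ_j})`. -/
def SimpleStrategy.gains {ℱ : MeasureTheory.Filtration ℝ≥0 m0}
    (H : SimpleStrategy ℱ) (X : ℝ≥0 → Ω → ℝ) (ω : Ω) : ℝ :=
  ∑ j ∈ Finset.Ico 1 H.n, H.g j ω * (X (H.τ (j + 1) ω) ω - X (H.τ j ω) ω)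

/-- membership in `Sʰ(𝔽)` : the jump times are at least `h` apart. -/
def SimpleStrategy.Spaced {ℱ : MeasureTheory.Filtration ℝ≥0 m0}
    (H : SimpleStrategy ℱ) (h : ℝ≥0) : Prop :=
  ∀ j, 1 ≤ j → j < H.n → ∀ ω, H.τ j ω + h ≤ H.τ (j + 1) ω

/-- `H` is an arbitrage for `X` under `μ`. -/
def IsArbitrage {ℱ : MeasureTheory.Filtration ℝ≥0 m0} (μ : MeasureTheory.Measure Ω)
    (X : ℝ≥0 → Ω → ℝ) (H : SimpleStrategy ℱ) : Prop :=
  (∀ᵐ ω ∂μ, 0 ≤ H.gains X ω) ∧ 0 < μ {ω | 0 < H.gains X ω}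

/-- no arbitrage in the class `S(𝔽)` of simple predictable integrands of bounded support. -/
def NoArbitrageSimple (μ : MeasureTheory.Measure Ω) (ℱ : MeasureTheory.Filtration ℝ≥0 m0)
    (X : ℝ≥0 → Ω → ℝ) : Prop :=
  ¬ ∃ H : SimpleStrategy ℱ, IsArbitrage μ X H

/-- no arbitrage in the Cheridito class `Π(𝔽) = ⋃_{h>0} Sʰ(𝔽)`. -/
def NoArbitrageCC (μ : MeasureTheory.Measure Ω) (ℱ : MeasureTheory.Filtration ℝ≥0 m0)
    (X : ℝ≥0 → Ω → ℝ) : Prop :=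
  ¬ ∃ (h : ℝ≥0) (H : SimpleStrategy ℱ), 0 < h ∧ H.Spaced h ∧ IsArbitrage μ X H

/-- `η ∈ L⁰_{+-}` : `η` is neither a nonnegative r.v. that is positive with positive
probability, nor a nonpositive r.v. that is negative with positive probability. -/
def MemLzeroPM (μ : MeasureTheory.Measure Ω) (η : Ω → ℝ) : Prop :=
  ¬ ((∀ᵐ ω ∂μ, 0 ≤ η ω) ∧ 0 < μ {ω | 0 < η ω}) ∧
  ¬ ((∀ᵐ ω ∂μ, η ω ≤ 0) ∧ 0 < μ {ω | η ω < 0})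

/-- all paths are right continuous with left limits. -/
def IsCadlag (X : ℝ≥0 → Ω → ℝ) : Prop :=
  ∀ ω, (∀ t : ℝ≥0, ContinuousWithinAt (fun s => X s ω) (Set.Ici t) t) ∧
    (∀ t : ℝ≥0, 0 < t →
      ∃ l : ℝ, Filter.Tendsto (fun s => X s ω) (nhdsWithin t (Set.Iio t)) (nhds l))

/-- a standard Brownian motion w.r.t. the filtration `ℱ`. -/
def IsStandardBM (μ : MeasureTheory.Measure Ω) (ℱ : MeasureTheory.Filtration ℝ≥0 m0)
    (B : ℝ≥0 → Ω → ℝ) : Prop :=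
  MeasureTheory.Adapted ℱ B ∧ (∀ ω, B 0 ω = 0) ∧ (∀ ω, Continuous fun t => B t ω) ∧
  ∀ s t : ℝ≥0, s < t →
    ProbabilityTheory.Indep
      (MeasurableSpace.comap (fun ω => B t ω - B s ω) (inferInstance : MeasurableSpace ℝ))
      (ℱ s) μ ∧
    MeasureTheory.Measure.map (fun ω => B t ω - B s ω) μ =
      ProbabilityTheory.gaussianReal 0 (t - s)

/-!
A simple arbitrage can be cut down to a one-period arbitrage `g (X_τ - X_σ)` with `g`
`𝓕_σ`-measurable: take the first trade after which the cumulative gain is an arbitrage and enter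
it only where the cumulative gain before it is nonpositive. Whether such a one-period strategy is
an arbitrage depends only on the signs of the increments of the price, which a strictly increasing
`f` preserves and a strictly decreasing `f` reverses (then trade `-g`). Measurability of `X_τ` for
`𝓕_τ` is where the càdlàg hypothesis enters: a right-continuous adapted process is progressively
measurable, and so is its composition with a monotone `f`.
-/

open scoped Topology

namespace NNReal

lemma le_ceil_mul_div (t : ℝ≥0) (k : ℕ) : t ≤ ⌈t * (k + 1)⌉₊ / (k + 1) := by
  rw [le_div_iff₀ (by positivity)]
  exact Nat.le_ceil _

lemma ceil_mul_div_le (t : ℝ≥0) (k : ℕ) : (⌈t * (k + 1)⌉₊ : ℝ≥0) / (k + 1) ≤ t + 1 / (k + 1) := by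
  rw [div_le_iff₀ (by positivity), add_mul, one_div, inv_mul_cancel₀ (by positivity)]
  exact (Nat.ceil_lt_add_one zero_le).le

lemma tendsto_ceil_mul_div (t : ℝ≥0) :
    Tendsto (fun k : ℕ => (⌈t * (k + 1)⌉₊ : ℝ≥0) / (k + 1)) atTop (𝓝[≥] t) := by
  refine tendsto_nhdsWithin_iff.2 ⟨?_, .of_forall fun k => le_ceil_mul_div t k⟩
  have hupper : Tendsto (fun k : ℕ => t + 1 / ((k : ℝ≥0) + 1)) atTop (𝓝 (t + 0)) :=
    tendsto_const_nhds.add tendsto_one_div_add_atTop_nhds_zero_nat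
  rw [add_zero] at hupper
  exact tendsto_of_tendsto_of_tendsto_of_le_of_le tendsto_const_nhds hupper
    (le_ceil_mul_div t) (ceil_mul_div_le t)

end NNReal

section RightContinuous

open TopologicalSpace

variable {β : Type*} [TopologicalSpace β] [PseudoMetrizableSpace β] [SecondCountableTopology β]
  [MeasurableSpace β] [BorelSpace β] {ℱ : Filtration ℝ≥0 m0} {u : ℝ≥0 → Ω → β}

theorem MeasureTheory.Adapted.isStronglyProgressive_of_continuousWithinAt_Ici
    (hu : Adapted ℱ u) (hrc : ∀ ω t, ContinuousWithinAt (u · ω) (Ici t) t) :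
    IsStronglyProgressive ℱ u := by
  intro i
  -- Approximate each time `t ≤ i` from the right by grid points `n / (k + 1)`, capped at `i`.
  let grid (k : ℕ) (t : ℝ≥0) : ℕ := ⌈t * (k + 1)⌉₊
  let time (k n : ℕ) : ℝ≥0 := min (n / (k + 1)) i
  refine stronglyMeasurable_of_tendsto (f := fun k (p : Iic i × Ω) => u (time k (grid k p.1)) p.2)
    atTop (fun k => Measurable.stronglyMeasurable ?_) ?_
  · have hstep : Measurable[(ℱ i).prod ⊤] fun q : Ω × ℕ => u (time k q.2) q.1 :=
      measurable_from_prod_countable_left fun n =>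
        (hu (time k n)).mono (ℱ.mono (min_le_right _ _)) le_rfl
    have hgrid : Measurable[Subtype.instMeasurableSpace.prod (ℱ i)]
        fun p : Iic i × Ω => grid k p.1 :=
      Nat.measurable_ceil.comp ((measurable_subtype_coe.comp measurable_fst).mul_const _)
    have hpair : Measurable[Subtype.instMeasurableSpace.prod (ℱ i), (ℱ i).prod ⊤]
        fun p : Iic i × Ω => (p.2, grid k p.1) :=
      measurable_snd.prodMk hgrid
    exact Measurable.comp (g := fun q : Ω × ℕ => u (time k q.2) q.1)
      (f := fun p : Iic i × Ω => (p.2, grid k p.1)) hstep hpair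
  · refine tendsto_pi_nhds.2 fun p => (hrc p.2 p.1).tendsto.comp ?_
    have hgrid := NNReal.tendsto_ceil_mul_div (p.1 : ℝ≥0)
    refine tendsto_nhdsWithin_iff.2 ⟨?_, .of_forall fun k => mem_Ici.2 (le_min ?_ p.1.2)⟩
    · simpa [min_eq_left (mem_Iic.1 p.1.2)] using
        (hgrid.mono_right nhdsWithin_le_nhds).min (tendsto_const_nhds (x := i))
    · exact NNReal.le_ceil_mul_div _ k

end RightContinuous

theorem MonotoneOn.measurable_comp {α : Type*} {_ : MeasurableSpace α} {f : ℝ → ℝ} {D : Set ℝ}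
    (hf : MonotoneOn f D) {Z : α → ℝ} (hZ : Measurable Z) (hD : ∀ a, Z a ∈ D) :
    Measurable fun a => f (Z a) := by
  refine measurable_of_Ioi fun c => ?_
  -- `f` need not be measurable off `D`: write `{c < f ∘ Z}` as `Z ⁻¹'` of an upper set instead.
  have hupper : IsUpperSet {y : ℝ | ∃ x ∈ D, x ≤ y ∧ c < f x} :=
    fun y y' hyy' ⟨x, hx, hxy, hfx⟩ => ⟨x, hx, hxy.trans hyy', hfx⟩
  convert hZ hupper.ordConnected.measurableSet using 1
  ext a
  exact ⟨fun h => ⟨Z a, hD a, le_rfl, h⟩,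
    fun ⟨x, hx, hxZ, hfx⟩ => hfx.trans_le (hf hx (hD a) hxZ)⟩

theorem AntitoneOn.measurable_comp {α : Type*} {_ : MeasurableSpace α} {f : ℝ → ℝ} {D : Set ℝ}
    (hf : AntitoneOn f D) {Z : α → ℝ} (hZ : Measurable Z) (hD : ∀ a, Z a ∈ D) :
    Measurable fun a => f (Z a) := by
  simpa [Pi.neg_def] using (hf.neg.measurable_comp hZ hD).neg

section Progressive

variable {ℱ : Filtration ℝ≥0 m0} {X : ℝ≥0 → Ω → ℝ} {f : ℝ → ℝ} {D : Set ℝ}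

theorem MeasureTheory.IsStronglyProgressive.comp_monotoneOn (hX : IsStronglyProgressive ℱ X)
    (hf : MonotoneOn f D) (hD : ∀ t ω, X t ω ∈ D) :
    IsStronglyProgressive ℱ fun t ω => f (X t ω) := fun i =>
  (hf.measurable_comp (hX i).measurable fun p => hD p.1 p.2).stronglyMeasurable

theorem MeasureTheory.IsStronglyProgressive.comp_antitoneOn (hX : IsStronglyProgressive ℱ X)
    (hf : AntitoneOn f D) (hD : ∀ t ω, X t ω ∈ D) :
    IsStronglyProgressive ℱ fun t ω => f (X t ω) := fun i =>
  (hf.measurable_comp (hX i).measurable fun p => hD p.1 p.2).stronglyMeasurable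

theorem MeasureTheory.IsStronglyProgressive.measurable_apply_stoppingTime
    (hX : IsStronglyProgressive ℱ X) {σ : Ω → ℝ≥0}
    (hσ : IsStoppingTime ℱ fun ω => (σ ω : WithTop ℝ≥0)) :
    Measurable[hσ.measurableSpace] fun ω => X (σ ω) ω :=
  measurable_stoppedValue hX hσ

end Progressive

def IsArbitrageGain (μ : Measure Ω) (η : Ω → ℝ) : Prop :=
  (∀ᵐ ω ∂μ, 0 ≤ η ω) ∧ 0 < μ {ω | 0 < η ω}

theorem ae_nonpos_or_measure_neg_pos_of_not_isArbitrageGain {μ : Measure Ω} {η : Ω → ℝ}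
    (h : ¬ IsArbitrageGain μ η) :
    (∀ᵐ ω ∂μ, η ω ≤ 0) ∨ 0 < μ {ω | η ω < 0} := by
  by_contra! hcon
  refine h ⟨?_, ?_⟩
  · rw [ae_iff]
    simpa only [not_le, nonpos_iff_eq_zero] using hcon.2
  · exact pos_iff_ne_zero.2 (frequently_ae_iff.1 hcon.1)

namespace IsArbitrageGain

variable {μ : Measure Ω} {η η' : Ω → ℝ}

theorem of_sign_eq (h : IsArbitrageGain μ η)
    (hsign : ∀ ω, SignType.sign (η' ω) = SignType.sign (η ω)) : IsArbitrageGain μ η' := by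
  refine ⟨h.1.mono fun ω hω => ?_, h.2.trans_le (measure_mono fun ω hω => ?_)⟩
  · rw [← sign_nonneg_iff, hsign, sign_nonneg_iff]; exact hω
  · rw [mem_ofPred_eq, ← sign_eq_one_iff, hsign, sign_eq_one_iff]; exact hω

theorem exists_indicator_of_sum {ξ : ℕ → Ω → ℝ} {n : ℕ}
    (h : IsArbitrageGain μ fun ω => ∑ k ∈ Finset.range n, ξ k ω) :
    ∃ k < n, IsArbitrageGain μ
      ({ω | ∑ j ∈ Finset.range k, ξ j ω ≤ 0}.indicator (ξ k)) := by
  induction n with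
  | zero => simp [IsArbitrageGain] at h
  | succ n ih =>
    by_cases hn : IsArbitrageGain μ fun ω => ∑ k ∈ Finset.range n, ξ k ω
    · obtain ⟨k, hk, hgain⟩ := ih hn
      exact ⟨k, hk.trans (Nat.lt_succ_self n), hgain⟩
    refine ⟨n, Nat.lt_succ_self n, ?_, ?_⟩
    · filter_upwards [h.1] with ω hω
      rw [Finset.sum_range_succ] at hω
      by_cases hA : ω ∈ {ω | ∑ j ∈ Finset.range n, ξ j ω ≤ 0}
      · rw [indicator_of_mem hA]; simp only [mem_ofPred_eq] at hA; linarith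
      · rw [indicator_of_notMem hA]
    · have hstep : ∀ ω, ∑ k ∈ Finset.range (n + 1), ξ k ω =
          ∑ k ∈ Finset.range n, ξ k ω + ξ n ω := fun ω => Finset.sum_range_succ _ _
      rcases ae_nonpos_or_measure_neg_pos_of_not_isArbitrageGain hn with hU | hU
      · refine h.2.trans_le (measure_mono_ae ?_)
        filter_upwards [hU] with ω hUω (hpos : 0 < ∑ k ∈ Finset.range (n + 1), ξ k ω)
        change 0 < indicator _ _ ω
        rw [indicator_of_mem (by exact hUω)]
        linarith [hstep ω]
      · refine hU.trans_le (measure_mono_ae ?_)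
        filter_upwards [h.1] with ω hω (hneg : ∑ k ∈ Finset.range n, ξ k ω < 0)
        change 0 < indicator _ _ ω
        rw [indicator_of_mem (by exact hneg.le)]
        linarith [hstep ω]

end IsArbitrageGain

section SignSub

variable {α β : Type*} [AddCommGroup α] [LinearOrder α] [IsOrderedAddMonoid α]
  [AddCommGroup β] [LinearOrder β] [IsOrderedAddMonoid β] {f : α → β} {D : Set α} {a b : α}

theorem StrictMonoOn.sign_sub (hf : StrictMonoOn f D) (ha : a ∈ D) (hb : b ∈ D) :
    SignType.sign (f b - f a) = SignType.sign (b - a) := by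
  rcases lt_trichotomy a b with h | rfl | h
  · rw [sign_pos (sub_pos.2 h), sign_pos (sub_pos.2 (hf ha hb h))]
  · simp
  · rw [sign_neg (sub_neg.2 h), sign_neg (sub_neg.2 (hf hb ha h))]

theorem StrictAntiOn.sign_sub (hf : StrictAntiOn f D) (ha : a ∈ D) (hb : b ∈ D) :
    SignType.sign (f b - f a) = SignType.sign (a - b) := by
  rcases lt_trichotomy a b with h | rfl | h
  · rw [sign_neg (sub_neg.2 h), sign_neg (sub_neg.2 (hf ha hb h))]
  · simp
  · rw [sign_pos (sub_pos.2 h), sign_pos (sub_pos.2 (hf hb ha h))]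

end SignSub

theorem isArbitrage_iff {ℱ : Filtration ℝ≥0 m0} {μ : Measure Ω} {X : ℝ≥0 → Ω → ℝ}
    {H : SimpleStrategy ℱ} : IsArbitrage μ X H ↔ IsArbitrageGain μ (H.gains X) :=
  Iff.rfl

namespace SimpleStrategy

variable {ℱ : Filtration ℝ≥0 m0} (H : SimpleStrategy ℱ) {μ : Measure Ω} {X : ℝ≥0 → Ω → ℝ}

theorem τ_le_τ {i j : ℕ} (hi : 1 ≤ i) (hij : i ≤ j) (hj : j ≤ H.n) (ω : Ω) :
    H.τ i ω ≤ H.τ j ω := by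
  induction j, hij using Nat.le_induction with
  | base => exact le_rfl
  | succ j hij ih => exact (ih (by omega)).trans (H.mono j (by omega) (by omega) ω)

def neg : SimpleStrategy ℱ :=
  { H with g := fun j ω => -H.g j ω, g_meas := fun j h1 h2 => (H.g_meas j h1 h2).neg }

theorem gains_neg (X : ℝ≥0 → Ω → ℝ) : H.neg.gains X = H.gains fun t ω => -X t ω :=
  funext fun _ => Finset.sum_congr rfl fun _ _ => by simp only [neg]; ring

def single (σ τ : Ω → ℝ≥0) (hσ : IsStoppingTime ℱ fun ω => (σ ω : WithTop ℝ≥0))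
    (hτ : IsStoppingTime ℱ fun ω => (τ ω : WithTop ℝ≥0)) (hστ : ∀ ω, σ ω ≤ τ ω)
    (hτ_bdd : ∃ T, ∀ ω, τ ω ≤ T) (g : Ω → ℝ) (hg : Measurable[hσ.measurableSpace] g) :
    SimpleStrategy ℱ where
  n := 2
  two_le := le_rfl
  g0 := 0
  τ j := if j = 2 then τ else σ
  g _ := g
  stopping j h1 h2 := by
    obtain rfl | rfl : j = 1 ∨ j = 2 := by omega
    · simpa using hσ
    · simpa using hτ
  mono j h1 h2 ω := by
    obtain rfl : j = 1 := by omega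
    simpa using hστ ω
  bounded := by simpa using hτ_bdd
  g_meas j h1 h2 := by
    obtain rfl : j = 1 := by omega
    simpa using hg

theorem gains_of_n_eq_two (hn : H.n = 2) (X : ℝ≥0 → Ω → ℝ) (ω : Ω) :
    H.gains X ω = H.g 1 ω * (X (H.τ 2 ω) ω - X (H.τ 1 ω) ω) := by
  simp [gains, hn]

theorem measurable_gain_step (hX : IsStronglyProgressive ℱ X) {j i : ℕ} (hj : 1 ≤ j)
    (hji : j < i) (hi : i ≤ H.n) :
    Measurable[(H.stopping i (by omega) hi).measurableSpace]
      fun ω => H.g j ω * (X (H.τ (j + 1) ω) ω - X (H.τ j ω) ω) := by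
  have hle : ∀ l (hl : 1 ≤ l) (hli : l ≤ i), (H.stopping l hl (hli.trans hi)).measurableSpace ≤
      (H.stopping i (by omega) hi).measurableSpace := fun l hl hli =>
    IsStoppingTime.measurableSpace_mono _ _ fun ω => WithTop.coe_le_coe.2 (H.τ_le_τ hl hli hi ω)
  exact ((H.g_meas j hj (by omega)).mono (hle j hj hji.le) le_rfl).mul
    (((hX.measurable_apply_stoppingTime _).mono (hle (j + 1) (by omega) hji) le_rfl).sub
      ((hX.measurable_apply_stoppingTime _).mono (hle j hj hji.le) le_rfl))

theorem exists_isArbitrage_n_eq_two (hX : IsStronglyProgressive ℱ X) (hH : IsArbitrage μ X H) :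
    ∃ H' : SimpleStrategy ℱ, H'.n = 2 ∧ IsArbitrage μ X H' := by
  set ξ : ℕ → Ω → ℝ :=
    fun k ω => H.g (k + 1) ω * (X (H.τ (k + 1 + 1) ω) ω - X (H.τ (k + 1) ω) ω)
  have hsum : H.gains X = fun ω => ∑ k ∈ Finset.range (H.n - 1), ξ k ω := by
    funext ω
    rw [gains, Finset.sum_Ico_eq_sum_range]
    simp only [ξ, add_comm 1]
  obtain ⟨k, hk, hA⟩ := IsArbitrageGain.exists_indicator_of_sum (hsum ▸ isArbitrage_iff.1 hH)
  have hn := H.two_le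
  set A := {ω | ∑ j ∈ Finset.range k, ξ j ω ≤ 0}
  have hAmeas : MeasurableSet[(H.stopping (k + 1) (by omega) (by omega)).measurableSpace] A :=
    measurableSet_le (Finset.measurable_sum _ fun j hj => H.measurable_gain_step hX (by omega)
      (by have := Finset.mem_range.1 hj; omega) (by omega)) measurable_const
  obtain ⟨T, hT⟩ := H.bounded
  refine ⟨single (H.τ (k + 1)) (H.τ (k + 1 + 1)) (H.stopping _ (by omega) (by omega))
    (H.stopping _ (by omega) (by omega)) (H.mono (k + 1) (by omega) (by omega))
    ⟨T, fun ω => (H.τ_le_τ (by omega) (by omega) le_rfl ω).trans (hT ω)⟩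
    (A.indicator (H.g (k + 1))) ((H.g_meas _ (by omega) (by omega)).indicator hAmeas), rfl, ?_⟩
  rw [isArbitrage_iff]
  convert hA using 2
  funext ω
  rw [gains_of_n_eq_two _ rfl]
  simp [single, ξ, indicator_mul_left]

end SimpleStrategy

section NoArbitrage

variable {ℱ : Filtration ℝ≥0 m0} {μ : Measure Ω} {X Y : ℝ≥0 → Ω → ℝ}

theorem exists_isArbitrage_of_sign_sub_eq (hX : IsStronglyProgressive ℱ X)
    (hXY : ∀ s t ω, SignType.sign (Y t ω - Y s ω) = SignType.sign (X t ω - X s ω))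
    (h : ∃ H : SimpleStrategy ℱ, IsArbitrage μ X H) :
    ∃ H : SimpleStrategy ℱ, IsArbitrage μ Y H := by
  obtain ⟨H, hH⟩ := h
  obtain ⟨H', hn, hH'⟩ := H.exists_isArbitrage_n_eq_two hX hH
  refine ⟨H', IsArbitrageGain.of_sign_eq hH' fun ω => ?_⟩
  rw [H'.gains_of_n_eq_two hn, H'.gains_of_n_eq_two hn, sign_mul, sign_mul, hXY]

theorem noArbitrageSimple_iff_of_sign_sub_eq (hX : IsStronglyProgressive ℱ X)
    (hY : IsStronglyProgressive ℱ Y)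
    (hXY : ∀ s t ω, SignType.sign (Y t ω - Y s ω) = SignType.sign (X t ω - X s ω)) :
    NoArbitrageSimple μ ℱ X ↔ NoArbitrageSimple μ ℱ Y :=
  not_congr ⟨exists_isArbitrage_of_sign_sub_eq hX hXY,
    exists_isArbitrage_of_sign_sub_eq hY fun s t ω => (hXY s t ω).symm⟩

theorem noArbitrageSimple_neg_iff :
    NoArbitrageSimple μ ℱ (fun t ω => -X t ω) ↔ NoArbitrageSimple μ ℱ X := by
  refine not_congr ⟨fun ⟨H, hH⟩ => ⟨H.neg, ?_⟩, fun ⟨H, hH⟩ => ⟨H.neg, ?_⟩⟩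
  · rwa [isArbitrage_iff, H.gains_neg]
  · simpa only [isArbitrage_iff, H.gains_neg, neg_neg] using hH

end NoArbitrage

theorem stmt10_general (ℱ : MeasureTheory.Filtration ℝ≥0 m0)
    (S : ℝ≥0 → Ω → ℝ) (hadapted : MeasureTheory.Adapted ℱ S) (hcadlag : IsCadlag S)
    (D : Set ℝ) (f : ℝ → ℝ) (hf : StrictMonoOn f D ∨ StrictAntiOn f D)
    (hrange : ∀ t ω, S t ω ∈ D)
    (Q : MeasureTheory.Measure Ω) :
    NoArbitrageSimple Q ℱ S ↔ NoArbitrageSimple Q ℱ (fun t ω => f (S t ω)) := by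
  have hS : IsStronglyProgressive ℱ S :=
    hadapted.isStronglyProgressive_of_continuousWithinAt_Ici fun ω t => (hcadlag ω).1 t
  rcases hf with hmono | hanti
  · exact noArbitrageSimple_iff_of_sign_sub_eq hS (hS.comp_monotoneOn hmono.monotoneOn hrange)
      fun s t ω => hmono.sign_sub (hrange s ω) (hrange t ω)
  · rw [← noArbitrageSimple_neg_iff]
    refine noArbitrageSimple_iff_of_sign_sub_eq hS.neg (hS.comp_antitoneOn hanti.antitoneOn hrange)
      fun s t ω => ?_
    rw [hanti.sign_sub (hrange s ω) (hrange t ω), neg_sub_neg]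

/-- **Corollary 5.** For a càdlàg adapted process `S` and a strictly monotone function
`f` defined on a set containing the range of `S`, no arbitrage of `S` in `S(𝔽)` is
equivalent to no arbitrage of `f ∘ S` in `S(𝔽)`, under any measure `Q` equivalent to `P`. -/
theorem stmt10 (P : MeasureTheory.Measure Ω) [MeasureTheory.IsProbabilityMeasure P]
    (ℱ : MeasureTheory.Filtration ℝ≥0 m0)
    (S : ℝ≥0 → Ω → ℝ) (hadapted : MeasureTheory.Adapted ℱ S) (hcadlag : IsCadlag S)
    (D : Set ℝ) (f : ℝ → ℝ) (hf : StrictMonoOn f D ∨ StrictAntiOn f D)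
    (hrange : ∀ t ω, S t ω ∈ D)
    (Q : MeasureTheory.Measure Ω) [MeasureTheory.IsProbabilityMeasure Q]
    (hQP : Q ≪ P) (hPQ : P ≪ Q) :
    NoArbitrageSimple Q ℱ S ↔ NoArbitrageSimple Q ℱ (fun t ω => f (S t ω)) :=
  stmt10_general ℱ S hadapted hcadlag D f hf hrange Q
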